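/- For all c > 0 and all v ≥ √(2c), the standard Gaussian upper tail satisfies Φ̄(v - c/v) ≤ 4 e^c · Φ̄(v). -/

import Mathlib

open MeasureTheory Set

/-- Standard Gaussian density. -/
noncomputable def gphi (v : ℝ) : ℝ := (Real.sqrt (2 * Real.pi))⁻¹ * Real.exp (-v ^ 2 / 2)

/-- Standard Gaussian upper tail probability. -/
noncomputable def PhiBar (v : ℝ) : ℝ := ∫ x in Set.Ioi v, gphi x

/-- Standard Gaussian CDF. -/
noncomputable def Phi (v : ℝ) : ℝ := ∫ x in Set.Iic v, gphi x

open Filter Topology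

/-! Put `u = v - c / v`. Since `u² = v² - 2c + (c/v)²`, the density satisfies `φ(u) ≤ eᶜ φ(v)`,
and `v ≥ √(2c)` gives `c / v ≤ v / 2`. For `v ≥ 1` the Mills-ratio bounds
`φ(v) / (v + 1) ≤ Φ̄(v) ≤ φ(v) / v` finish the proof; for `v ≤ 1` the gap `Φ̄(u) - Φ̄(v)` is at
most `(c / v) φ(u) ≤ eᶜ φ(v) / 2`, which is again controlled by the lower Mills bound. -/

lemma gphi_nonneg (x : ℝ) : 0 ≤ gphi x := by
  unfold gphi; positivity

lemma gphi_le_gphi {x y : ℝ} (hx : 0 ≤ x) (hxy : x ≤ y) : gphi y ≤ gphi x := by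
  unfold gphi
  gcongr

lemma gphi_sub_div_le (c : ℝ) {v : ℝ} (hv : v ≠ 0) :
    gphi (v - c / v) ≤ Real.exp c * gphi v := by
  have hsq : -(v - c / v) ^ 2 / 2 = c + -v ^ 2 / 2 - (c / v) ^ 2 / 2 := by
    field_simp
    ring
  unfold gphi
  rw [mul_left_comm, ← Real.exp_add, hsq]
  gcongr
  linarith [sq_nonneg (c / v)]

lemma hasDerivAt_gphi (x : ℝ) : HasDerivAt gphi (-(x * gphi x)) x := by
  have h : HasDerivAt (fun y : ℝ => -y ^ 2 / 2) (-x) x :=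
    ((hasDerivAt_pow 2 x).neg.div_const 2).congr_deriv (by ring)
  exact (h.exp.const_mul (Real.sqrt (2 * Real.pi))⁻¹).congr_deriv (by simp only [gphi]; ring)

lemma integrable_gphi : Integrable gphi := by
  refine ((integrable_exp_neg_mul_sq (by norm_num : (0 : ℝ) < 1 / 2)).const_mul
    (Real.sqrt (2 * Real.pi))⁻¹).congr (Eventually.of_forall fun x => ?_)
  unfold gphi
  ring_nf

lemma tendsto_gphi_atTop : Tendsto gphi atTop (𝓝 0) := by
  have h : Tendsto (fun x : ℝ => -x ^ 2 / 2) atTop atBot :=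
    (tendsto_neg_atBot_iff.mpr (tendsto_pow_atTop two_ne_zero)).atBot_div_const two_pos
  have := (Real.tendsto_exp_atBot.comp h).const_mul (Real.sqrt (2 * Real.pi))⁻¹
  rwa [mul_zero] at this

lemma integral_Ioi_eq_of_hasDerivAt_neg {g h : ℝ → ℝ} {a : ℝ}
    (hderiv : ∀ x ∈ Ici a, HasDerivAt g (-h x) x) (hpos : ∀ x ∈ Ioi a, 0 ≤ h x)
    (hlim : Tendsto g atTop (𝓝 0)) :
    IntegrableOn h (Ioi a) ∧ ∫ x in Ioi a, h x = g a := by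
  have hneg : ∀ x ∈ Ioi a, -h x ≤ 0 := fun x hx => neg_nonpos.mpr (hpos x hx)
  refine ⟨by simpa using (integrableOn_Ioi_deriv_of_nonpos' hderiv hneg hlim).neg, ?_⟩
  have := integral_Ioi_of_hasDerivAt_of_nonpos' hderiv hneg hlim
  rw [integral_neg] at this
  linarith

lemma phiBar_le_of_gphi_le {g h : ℝ → ℝ} {a : ℝ}
    (hderiv : ∀ x ∈ Ici a, HasDerivAt g (-h x) x) (hlim : Tendsto g atTop (𝓝 0))
    (hle : ∀ x ∈ Ioi a, gphi x ≤ h x) : PhiBar a ≤ g a := by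
  obtain ⟨hint, heq⟩ := integral_Ioi_eq_of_hasDerivAt_neg hderiv
    (fun x hx => (gphi_nonneg x).trans (hle x hx)) hlim
  rw [← heq]
  exact setIntegral_mono_on integrable_gphi.integrableOn hint measurableSet_Ioi hle

lemma le_phiBar_of_le_gphi {g h : ℝ → ℝ} {a : ℝ}
    (hderiv : ∀ x ∈ Ici a, HasDerivAt g (-h x) x) (hpos : ∀ x ∈ Ioi a, 0 ≤ h x)
    (hlim : Tendsto g atTop (𝓝 0)) (hle : ∀ x ∈ Ioi a, h x ≤ gphi x) : g a ≤ PhiBar a := by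
  obtain ⟨hint, heq⟩ := integral_Ioi_eq_of_hasDerivAt_neg hderiv hpos hlim
  rw [← heq]
  exact setIntegral_mono_on hint integrable_gphi.integrableOn measurableSet_Ioi hle

lemma phiBar_le_gphi_div {u : ℝ} (hu : 0 < u) : PhiBar u ≤ gphi u / u := by
  refine phiBar_le_of_gphi_le (g := fun x => gphi x / x)
    (h := fun x => gphi x * (1 + (x ^ 2)⁻¹)) (fun x hx => ?_)
    (tendsto_gphi_atTop.div_atTop tendsto_id) (fun x _ => ?_)
  · have hx : x ≠ 0 := (hu.trans_le hx).ne'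
    refine ((hasDerivAt_gphi x).div (hasDerivAt_id' x) hx).congr_deriv ?_
    field_simp
    ring
  · have := gphi_nonneg x
    have : 0 ≤ (x ^ 2)⁻¹ := by positivity
    nlinarith

lemma gphi_div_add_one_le_phiBar {v : ℝ} (hv : 0 ≤ v) : gphi v / (v + 1) ≤ PhiBar v := by
  refine le_phiBar_of_le_gphi (g := fun x => gphi x / (x + 1))
    (h := fun x => gphi x * ((x ^ 2 + x + 1) / (x + 1) ^ 2)) (fun x hx => ?_) (fun x hx => ?_)
    (tendsto_gphi_atTop.div_atTop (tendsto_atTop_add_const_right _ 1 tendsto_id))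
    (fun x hx => ?_)
  · have hx : x + 1 ≠ 0 := by linarith [hx.out]
    refine ((hasDerivAt_gphi x).div ((hasDerivAt_id' x).add_const 1) hx).congr_deriv ?_
    field_simp
    ring
  · have := gphi_nonneg x
    have : 0 < x := hv.trans_lt hx
    positivity
  · have hx : 0 < x := hv.trans_lt hx
    have hfrac : (x ^ 2 + x + 1) / (x + 1) ^ 2 ≤ 1 := by
      rw [div_le_one (by positivity)]
      nlinarith
    simpa using mul_le_mul_of_nonneg_left hfrac (gphi_nonneg x)

lemma phiBar_le_add {u v : ℝ} (hu : 0 ≤ u) (huv : u ≤ v) :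
    PhiBar u ≤ PhiBar v + (v - u) * gphi u := by
  have hsplit : PhiBar u = (∫ x in Ioc u v, gphi x) + PhiBar v := by
    unfold PhiBar
    rw [← setIntegral_union (Ioc_disjoint_Ioi le_rfl) measurableSet_Ioi
      integrable_gphi.integrableOn integrable_gphi.integrableOn, Ioc_union_Ioi_eq_Ioi huv]
  have hmid : ∫ x in Ioc u v, gphi x ≤ (v - u) * gphi u := by
    have := setIntegral_mono_on integrable_gphi.integrableOn
      (integrableOn_const (s := Ioc u v) (C := gphi u) (by simp)) measurableSet_Ioc
      fun x hx => gphi_le_gphi hu hx.1.le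
    rwa [setIntegral_const, Real.volume_real_Ioc_of_le huv, smul_eq_mul] at this
  linarith

lemma phiBar_sub_div_le_of_one_le {c v : ℝ} (hv1 : 1 ≤ v) (hcv : c / v ≤ v / 2) :
    PhiBar (v - c / v) ≤ 4 * Real.exp c * PhiBar v := by
  have hv0 : 0 < v := by linarith
  have hE : 0 ≤ Real.exp c * gphi v := mul_nonneg (Real.exp_pos c).le (gphi_nonneg v)
  calc PhiBar (v - c / v)
      ≤ gphi (v - c / v) / (v - c / v) := phiBar_le_gphi_div (by linarith)
    _ ≤ Real.exp c * gphi v / (v / 2) :=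
        div_le_div₀ hE (gphi_sub_div_le c hv0.ne') (by positivity) (by linarith)
    _ = Real.exp c * gphi v * (2 / v) := by ring
    _ ≤ Real.exp c * gphi v * (4 / (v + 1)) := by
        refine mul_le_mul_of_nonneg_left ?_ hE
        rw [div_le_div_iff₀ hv0 (by linarith)]
        linarith
    _ = 4 * Real.exp c * (gphi v / (v + 1)) := by ring
    _ ≤ 4 * Real.exp c * PhiBar v := by gcongr; exact gphi_div_add_one_le_phiBar hv0.le

lemma phiBar_sub_div_le_of_le_one {c v : ℝ} (hc : 0 ≤ c) (hv0 : 0 < v) (hv1 : v ≤ 1)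
    (hcv : c / v ≤ v / 2) : PhiBar (v - c / v) ≤ 4 * Real.exp c * PhiBar v := by
  have hE : 0 ≤ Real.exp c * gphi v := mul_nonneg (Real.exp_pos c).le (gphi_nonneg v)
  have hmills := gphi_div_add_one_le_phiBar hv0.le
  have hgap : c / v * gphi (v - c / v) ≤ 3 * Real.exp c * (gphi v / (v + 1)) :=
    calc c / v * gphi (v - c / v)
        ≤ 1 / 2 * (Real.exp c * gphi v) :=
          mul_le_mul (by linarith) (gphi_sub_div_le c hv0.ne') (gphi_nonneg _) (by norm_num)
      _ ≤ 3 / (v + 1) * (Real.exp c * gphi v) := by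
          refine mul_le_mul_of_nonneg_right ?_ hE
          rw [le_div_iff₀ (by linarith)]
          linarith
      _ = 3 * Real.exp c * (gphi v / (v + 1)) := by ring
  have hpos : 0 ≤ PhiBar v := (div_nonneg (gphi_nonneg v) (by linarith)).trans hmills
  calc PhiBar (v - c / v)
      ≤ PhiBar v + (v - (v - c / v)) * gphi (v - c / v) :=
        phiBar_le_add (by linarith) (by linarith [div_nonneg hc hv0.le])
    _ ≤ Real.exp c * PhiBar v + 3 * Real.exp c * PhiBar v := by
        rw [sub_sub_cancel]
        exact add_le_add (le_mul_of_one_le_left hpos (Real.one_le_exp hc))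
          (hgap.trans (mul_le_mul_of_nonneg_left hmills (by positivity)))
    _ = 4 * Real.exp c * PhiBar v := by ring

theorem stmt3 : ∀ c v : ℝ, 0 < c → Real.sqrt (2 * c) ≤ v →
    PhiBar (v - c / v) ≤ 4 * Real.exp c * PhiBar v := by
  intro c v hc hv
  have hv0 : 0 < v := (Real.sqrt_pos.mpr (by linarith)).trans_le hv
  have hcv : c / v ≤ v / 2 := by
    rw [div_le_div_iff₀ hv0 two_pos]
    nlinarith [Real.sq_sqrt (by linarith : 0 ≤ 2 * c), Real.sqrt_nonneg (2 * c)]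
  rcases le_total 1 v with hv1 | hv1
  · exact phiBar_sub_div_le_of_one_le hv1 hcv
  · exact phiBar_sub_div_le_of_le_one hc.le hv0 hv1 hcv
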